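/- arXiv:1508.07370 — 3 statements merged into one kernel-verified Lean document; each statement's English description precedes it below -/
import Mathlib

section
/- Let e_1, ..., e_n be positive reals, m a positive natural number, and u_i, u'_i positive reals for each i. If Σᵢ eᵢ·log(u'ᵢ) ≥ Σᵢ eᵢ·log(uᵢ) - m·maxᵢ eᵢ and uᵢ = t·eᵢ for all i for some t > 0, then Σᵢ u'ᵢ ≥ e^{-m·maxᵢ eᵢ / Σᵢ eᵢ} · Σᵢ uᵢ. -/
theorem stmt_6 (n m : ℕ) (hn : 0 < n) (hm : 0 < m)
    (e u u' : Fin n → ℝ) (t : ℝ) (ht : 0 < t)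
    (he : ∀ i, 0 < e i) (hu : ∀ i, 0 < u i) (hu' : ∀ i, 0 < u' i)
    (hne : (Finset.univ : Finset (Fin n)).Nonempty)
    (hscale : ∀ i, u i = t * e i)
    (hlog : ∑ i, e i * Real.log (u i) - m * Finset.univ.sup' hne e ≤
      ∑ i, e i * Real.log (u' i)) :
    Real.exp (-(m * Finset.univ.sup' hne e) / ∑ i, e i) * ∑ i, u i ≤ ∑ i, u' i := by
  set E : ℝ := ∑ i, e i with hE
  have hEpos : 0 < E := Finset.sum_pos (fun i _ => he i) hne
  set M : ℝ := m * Finset.univ.sup' hne e with hM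
  set S' : ℝ := ∑ i, u' i with hS'
  have hS'pos : 0 < S' := Finset.sum_pos (fun i _ => hu' i) hne
  -- Jensen for log
  have hjensen : ∑ i, (e i / E) • Real.log (u' i / e i) ≤
      Real.log (∑ i, (e i / E) • (u' i / e i)) := by
    apply (strictConcaveOn_log_Ioi.concaveOn).le_map_sum
    · intro i _; exact div_nonneg (he i).le hEpos.le
    · rw [← Finset.sum_div, ← hE, div_self hEpos.ne']
    · intro i _; exact Set.mem_Ioi.mpr (div_pos (hu' i) (he i))
  have hsum_eq : ∑ i, (e i / E) • (u' i / e i) = S' / E := by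
    rw [hS', Finset.sum_div]
    apply Finset.sum_congr rfl
    intro i _
    rw [smul_eq_mul, div_mul_div_comm,
      div_eq_div_iff (mul_pos hEpos (he i)).ne' hEpos.ne']
    ring
  have hlhs : ∑ i, (e i / E) • Real.log (u' i / e i) =
      (∑ i, e i * Real.log (u' i) - ∑ i, e i * Real.log (e i)) / E := by
    rw [sub_div, Finset.sum_div, Finset.sum_div, ← Finset.sum_sub_distrib]
    apply Finset.sum_congr rfl
    intro i _
    rw [Real.log_div (hu' i).ne' (he i).ne', smul_eq_mul]
    ring
  -- rewrite ∑ e i log (u i)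
  have hulog : ∑ i, e i * Real.log (u i) = E * Real.log t + ∑ i, e i * Real.log (e i) := by
    rw [hE, Finset.sum_mul, ← Finset.sum_add_distrib]
    apply Finset.sum_congr rfl
    intro i _
    rw [hscale i, Real.log_mul ht.ne' (he i).ne']
    ring
  have key : Real.log t - M / E ≤ Real.log (S' / E) := by
    rw [← hsum_eq]
    refine le_trans ?_ hjensen
    rw [hlhs]
    rw [hulog] at hlog
    rw [le_div_iff₀ hEpos]
    have hexpand : (Real.log t - M / E) * E = E * Real.log t - M := by
      field_simp
    rw [hexpand]
    linarith
  have hexp := Real.exp_le_exp.mpr key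
  rw [Real.exp_sub, Real.exp_log ht, Real.exp_log (by positivity : (0:ℝ) < S' / E)] at hexp
  have hsumu : ∑ i, u i = t * E := by
    rw [hE, Finset.mul_sum]; exact Finset.sum_congr rfl fun i _ => hscale i
  rw [hsumu, neg_div, Real.exp_neg]
  calc (Real.exp (M / E))⁻¹ * (t * E) = t / Real.exp (M / E) * E := by ring
    _ ≤ S' / E * E := by
        apply mul_le_mul_of_nonneg_right hexp hEpos.le
    _ = S' := by field_simp
end

section
/- Let m ≥ 2 and k be natural numbers, fix a coordinate j, fix n_{-j} ∈ ℕ^{m-1}, and suppose that for every choice of the other coordinates n'_{-j} ∈ ℕ^{m-1}, the set of values n'_j ∈ ℕ such that (n'_j, n'_{-j}) is 'bad' has cardinality at most M. Call a point (n_j, n_{-j}) 'k-covered' if there exists a bad point (n'_j, n'_{-j}) with n'_h ≤ n_h for all coordinates h and Σ_h (n_h - n'_h) ≤ k. Then for the fixed n_{-j}, the number of values n_j such that (n_j, n_{-j}) is k-covered is at most M · C(m+k, m). -/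
/-!
A covered value `t` is witnessed by a bad point `n'` whose deficit `w = update nrest j t - n'`
has total size at most `k`. For a fixed deficit `w` the witness is `update (nrest - w) j b` with
`t = b + w j`, so the fiber bound leaves at most `M` values of `t` per deficit, and there are
`C(m + k, m)` deficits of total size at most `k`.
-/

open Finset Function

theorem Finset.Nat.card_antidiagonalTuple (m n : ℕ) :
    #(Nat.antidiagonalTuple m n) = (m + n - 1).choose n := by
  rw [card_eq_of_equiv_fintype ((Equiv.subtypeEquivRight fun _ => Nat.mem_antidiagonalTuple).trans
    (Sym.equivNatSumOfFintype (Fin m) n).symm), Sym.card_sym_eq_choose, Fintype.card_fin]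

def boundedSumTuples (m k : ℕ) : Finset (Fin m → ℕ) :=
  (range (k + 1)).biUnion (Nat.antidiagonalTuple m)

theorem mem_boundedSumTuples {m k : ℕ} {w : Fin m → ℕ} :
    w ∈ boundedSumTuples m k ↔ ∑ i, w i ≤ k := by
  simp [boundedSumTuples, Nat.mem_antidiagonalTuple]

/-- Stars and bars with a slack variable: `w ↦ (w, k - ∑ w)`. -/
theorem card_boundedSumTuples (m k : ℕ) : #(boundedSumTuples m k) = (m + k).choose m := by
  rw [Nat.choose_symm_add, ← Nat.add_sub_cancel (m + k) 1, Nat.add_right_comm,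
    ← Finset.Nat.card_antidiagonalTuple]
  refine card_nbij' (fun w => Fin.snoc w (k - ∑ i, w i)) Fin.init ?_ ?_ ?_ ?_
  · intro w hw
    simp only [mem_coe, mem_boundedSumTuples, Nat.mem_antidiagonalTuple] at hw ⊢
    rw [Fin.sum_univ_castSucc]
    simp only [Fin.snoc_castSucc, Fin.snoc_last]
    omega
  · intro w hw
    simp only [mem_coe, mem_boundedSumTuples, Nat.mem_antidiagonalTuple] at hw ⊢
    rw [Fin.sum_univ_castSucc] at hw
    exact hw ▸ Nat.le_add_right _ _
  · intro w _
    exact Fin.init_snoc _ _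
  · intro w hw
    simp only [mem_coe, Nat.mem_antidiagonalTuple] at hw
    rw [Fin.sum_univ_castSucc] at hw
    conv_rhs => rw [← Fin.snoc_init_self w]
    simp only [Fin.init, ← hw, Nat.add_sub_cancel_left]

def deficitFiber {ι : Type*} [DecidableEq ι] (P : (ι → ℕ) → Prop) (v : ι → ℕ) (j : ι)
    (w : ι → ℕ) : Set ℕ :=
  (· + w j) '' {b | P (update (v - w) j b)}

theorem mem_deficitFiber_of_le {ι : Type*} [DecidableEq ι] {P : (ι → ℕ) → Prop}
    {v n' : ι → ℕ} {j : ι} {t : ℕ} (hP : P n') (hle : n' ≤ update v j t) :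
    t ∈ deficitFiber P v j (update v j t - n') := by
  set w := update v j t - n'
  have hn' : update (v - w) j (t - w j) = n' := by
    rw [update_sub, update_eq_self, tsub_tsub_cancel_of_le hle]
  refine ⟨t - w j, show P _ from hn' ▸ hP, Nat.sub_add_cancel ?_⟩
  simp only [w, Pi.sub_apply, update_self]
  exact Nat.sub_le _ _

theorem stmt_11_general (m k M : ℕ) (j : Fin m)
    (Bad : (Fin m → ℕ) → Prop) (nrest : Fin m → ℕ)
    (hfiber : ∀ v : Fin m → ℕ,
      {t : ℕ | Bad (Function.update v j t)}.Finite ∧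
        {t : ℕ | Bad (Function.update v j t)}.ncard ≤ M) :
    {t : ℕ | ∃ n' : Fin m → ℕ, Bad n' ∧
        (∀ h, n' h ≤ Function.update nrest j t h) ∧
        ∑ h, (Function.update nrest j t h - n' h) ≤ k}.Finite ∧
      {t : ℕ | ∃ n' : Fin m → ℕ, Bad n' ∧
        (∀ h, n' h ≤ Function.update nrest j t h) ∧
        ∑ h, (Function.update nrest j t h - n' h) ≤ k}.ncard ≤
          M * Nat.choose (m + k) m := by
  set S := {t : ℕ | ∃ n' : Fin m → ℕ, Bad n' ∧
      (∀ h, n' h ≤ Function.update nrest j t h) ∧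
      ∑ h, (Function.update nrest j t h - n' h) ≤ k}
  have hcover : S ⊆ ⋃ w ∈ boundedSumTuples m k, deficitFiber Bad nrest j w := by
    rintro t ⟨n', hbad, hle, hsum⟩
    exact Set.mem_biUnion (mem_boundedSumTuples.2 hsum) (mem_deficitFiber_of_le hbad hle)
  have hfin (w) : (deficitFiber Bad nrest j w).Finite := (hfiber _).1.image _
  have hcard (w) : (deficitFiber Bad nrest j w).ncard ≤ M :=
    (Set.ncard_image_le (hfiber _).1).trans (hfiber _).2
  have hUfin := (boundedSumTuples m k).finite_toSet.biUnion fun w _ => hfin w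
  refine ⟨hUfin.subset hcover, ?_⟩
  calc S.ncard ≤ (⋃ w ∈ boundedSumTuples m k, deficitFiber Bad nrest j w).ncard :=
        Set.ncard_le_ncard hcover hUfin
    _ ≤ ∑ w ∈ boundedSumTuples m k, (deficitFiber Bad nrest j w).ncard :=
        set_ncard_biUnion_le _ _
    _ ≤ #(boundedSumTuples m k) * M := sum_le_card_nsmul _ _ _ fun w _ => hcard w
    _ = M * (m + k).choose m := by rw [card_boundedSumTuples, Nat.mul_comm]

theorem stmt_11 (m k M : ℕ) (hm : 2 ≤ m) (j : Fin m)
    (Bad : (Fin m → ℕ) → Prop) (nrest : Fin m → ℕ)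
    (hfiber : ∀ v : Fin m → ℕ,
      {t : ℕ | Bad (Function.update v j t)}.Finite ∧
        {t : ℕ | Bad (Function.update v j t)}.ncard ≤ M) :
    {t : ℕ | ∃ n' : Fin m → ℕ, Bad n' ∧
        (∀ h, n' h ≤ Function.update nrest j t h) ∧
        ∑ h, (Function.update nrest j t h - n' h) ≤ k}.Finite ∧
      {t : ℕ | ∃ n' : Fin m → ℕ, Bad n' ∧
        (∀ h, n' h ≤ Function.update nrest j t h) ∧
        ∑ h, (Function.update nrest j t h - n' h) ≤ k}.ncard ≤
          M * Nat.choose (m + k) m :=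
  stmt_11_general m k M j Bad nrest hfiber
end

section
/- Let u : ℝ_{≥0}^m → ℝ_{>0} be continuous, concave, and homogeneous of degree 1 (u(αx) = α·u(x) for all α > 0), let e > 0, and let p ∈ ℝ_{>0}^m. If x* ∈ ℝ_{≥0}^m with u(x*) > 0 maximizes the function x ↦ e·log(u(x)) - Σⱼ pⱼ·xⱼ over ℝ_{≥0}^m, then Σⱼ pⱼ·x*ⱼ = e. -/
theorem stmt_12 (m : ℕ) (u : (Fin m → ℝ) → ℝ) (e : ℝ) (he : 0 < e)
    (p : Fin m → ℝ) (hp : ∀ j, 0 < p j)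
    (hcont : ContinuousOn u {x | ∀ j, 0 ≤ x j})
    (hconc : ConcaveOn ℝ {x | ∀ j, 0 ≤ x j} u)
    (hhom : ∀ α : ℝ, 0 < α → ∀ x : Fin m → ℝ, (∀ j, 0 ≤ x j) →
      u (α • x) = α * u x)
    (xstar : Fin m → ℝ) (hxstar : ∀ j, 0 ≤ xstar j) (hupos : 0 < u xstar)
    (hmax : ∀ x : Fin m → ℝ, (∀ j, 0 ≤ x j) →
      e * Real.log (u x) - ∑ j, p j * x j ≤
        e * Real.log (u xstar) - ∑ j, p j * xstar j) :
    ∑ j, p j * xstar j = e := by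
  set S : ℝ := ∑ j, p j * xstar j with hS
  -- Key inequality: for all α > 0, e * log α ≤ (α - 1) * S
  have key : ∀ α : ℝ, 0 < α → e * Real.log α ≤ (α - 1) * S := by
    intro α hα
    have hnn : ∀ j, 0 ≤ (α • xstar) j := fun j => by
      simpa using mul_nonneg hα.le (hxstar j)
    have h1 := hmax (α • xstar) hnn
    have h2 : u (α • xstar) = α * u xstar := hhom α hα xstar hxstar
    have h3 : (∑ j, p j * (α • xstar) j) = α * S := by
      rw [hS, Finset.mul_sum]
      exact Finset.sum_congr rfl fun j _ => by simp [Pi.smul_apply]; ring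
    rw [h2, h3, Real.log_mul (ne_of_gt hα) (ne_of_gt hupos)] at h1
    nlinarith [h1]
  -- Derived: for all α > 0, e * (α - 1) ≤ α * (α - 1) * S
  have key2 : ∀ α : ℝ, 0 < α → e * (α - 1) ≤ α * (α - 1) * S := by
    intro α hα
    have hlog : 1 - 1/α ≤ Real.log α := by
      have h := Real.log_le_sub_one_of_pos (x := 1/α) (by positivity)
      rw [one_div, Real.log_inv] at h
      have : (α : ℝ)⁻¹ = 1/α := (one_div α).symm
      linarith [this ▸ h]
    have h := key α hα
    have h4 : e * (1 - 1/α) ≤ (α - 1) * S :=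
      le_trans (by nlinarith) h
    have h5 : α * (e * (1 - 1/α)) = e * (α - 1) := by
      field_simp
    nlinarith [mul_le_mul_of_nonneg_left h4 hα.le]
  rcases lt_trichotomy S e with hlt | heq | hgt
  · exfalso
    have hS0 : 0 < S := by
      by_contra h
      push_neg at h
      have := key2 2 two_pos
      nlinarith
    set α := (1 + e/S)/2 with hαdef
    have hes : 1 < e/S := (one_lt_div hS0).2 hlt
    have hα1 : 1 < α := by rw [hαdef]; linarith
    have hαe : α * S < e := by
      have : α < e/S := by rw [hαdef]; linarith
      calc α * S < (e/S) * S := by nlinarith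
        _ = e := by field_simp
    have h := key2 α (by linarith)
    nlinarith [mul_pos (sub_pos.2 hα1) (sub_pos.2 hαe)]
  · exact heq
  · exfalso
    have hS0 : 0 < S := lt_trans he hgt
    set α := (1 + e/S)/2 with hαdef
    have hes : e/S < 1 := (div_lt_one hS0).2 hgt
    have hes0 : 0 < e/S := div_pos he hS0
    have hα1 : α < 1 := by rw [hαdef]; linarith
    have hα0 : 0 < α := by rw [hαdef]; linarith
    have hαe : e < α * S := by
      have : e/S < α := by rw [hαdef]; linarith
      calc e = (e/S) * S := by field_simp
        _ < α * S := by nlinarith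
    have h := key2 α hα0
    nlinarith [mul_pos (sub_pos.2 hα1) (sub_pos.2 hαe)]
end
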